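/- arXiv:1308.4828 — 2 statements merged into one kernel-verified Lean document; each statement's English description precedes it below -/
import Mathlib

section
/- Let N ≥ 1 be a natural number and let x, y ∈ [0,1]^N be vectors satisfying ∑_{i=1}^N y_i = 1 and ∑_{i=1}^N x_i y_i ≥ 1/2. Then there exists an index i ∈ {1,…,N} such that x_i^2 · y_i ≥ 1/(4N). -/
/-!
Since `y` is a probability vector, Cauchy–Schwarz (Jensen for `t ↦ t ^ 2`) gives
`∑ x i ^ 2 * y i ≥ (∑ x i * y i) ^ 2 ≥ 1 / 4`, and some term of a sum of `N` terms is at least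
the average `1 / (4 N)`.
-/

open Finset

theorem sq_sum_mul_le_sum_sq_mul {ι R : Type*} [CommRing R] [LinearOrder R] [IsStrictOrderedRing R]
    (s : Finset ι) (x : ι → R) {y : ι → R} (hy : ∀ i ∈ s, 0 ≤ y i)
    (hsum : ∑ i ∈ s, y i = 1) : (∑ i ∈ s, x i * y i) ^ 2 ≤ ∑ i ∈ s, x i ^ 2 * y i := by
  simpa [hsum] using sum_sq_le_sum_mul_sum_of_sq_le_mul s
    (fun i hi => mul_nonneg (sq_nonneg (x i)) (hy i hi)) hy
    (fun i _ => le_of_eq (by ring))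

theorem Finset.exists_div_card_le_of_le_sum {ι K : Type*} [Field K] [LinearOrder K]
    [IsStrictOrderedRing K] {s : Finset ι} (hs : s.Nonempty) {f : ι → K} {a : K}
    (h : a ≤ ∑ i ∈ s, f i) : ∃ i ∈ s, a / #s ≤ f i := by
  refine exists_le_of_sum_le hs ?_
  have hcard : (#s : K) ≠ 0 := Nat.cast_ne_zero.mpr hs.card_pos.ne'
  rwa [sum_const, nsmul_eq_mul, mul_div_cancel₀ a hcard]

theorem exists_sq_mul_ge_general (N : ℕ) (x y : Fin N → ℝ)
    (hy : ∀ i, y i ∈ Set.Icc (0 : ℝ) 1)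
    (hsum : ∑ i, y i = 1) (hxy : 1 / 2 ≤ ∑ i, x i * y i) :
    ∃ i, 1 / (4 * N) ≤ x i ^ 2 * y i := by
  have hquarter : 1 / 4 ≤ ∑ i, x i ^ 2 * y i :=
    calc (1 : ℝ) / 4 = (1 / 2) ^ 2 := by norm_num
      _ ≤ (∑ i, x i * y i) ^ 2 := pow_le_pow_left₀ (by norm_num) hxy 2
      _ ≤ ∑ i, x i ^ 2 * y i := sq_sum_mul_le_sum_sq_mul _ x (fun i _ => (hy i).1) hsum
  have hne : (univ : Finset (Fin N)).Nonempty := nonempty_of_sum_ne_zero (f := y) (by simp [hsum])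
  obtain ⟨i, -, hi⟩ := exists_div_card_le_of_le_sum hne hquarter
  rw [card_univ, Fintype.card_fin, div_div] at hi
  exact ⟨i, hi⟩

/-- **Lemma A.1**: if `x, y ∈ [0,1]^N` with `∑ y i = 1` and `∑ x i * y i ≥ 1/2`,
then some index `i` satisfies `x i ^ 2 * y i ≥ 1 / (4 N)`. -/
theorem exists_sq_mul_ge (N : ℕ) (hN : 1 ≤ N) (x y : Fin N → ℝ)
    (hx : ∀ i, x i ∈ Set.Icc (0 : ℝ) 1) (hy : ∀ i, y i ∈ Set.Icc (0 : ℝ) 1)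
    (hsum : ∑ i, y i = 1) (hxy : 1 / 2 ≤ ∑ i, x i * y i) :
    ∃ i, 1 / (4 * N) ≤ x i ^ 2 * y i :=
  exists_sq_mul_ge_general N x y hy hsum hxy
end

section
/- Let a, b > 2 be real numbers and define x := 4a·(log(ab))^2, where log denotes the natural logarithm. Then x ≥ a·log(bx). -/
/-! With `L := log (a b)` one has `b x = 4 (a b) L²`, so it suffices that `log (4 y (log y)²) ≤ 4 (log y)²`
for every `y > 1`. Expanding the logarithm and using `log L ≤ L - 1` reduces this to
`4 L² - 3 L + 2 - log 4 ≥ 0`, which holds because `log 4 < 23/16` and `4 L² - 3 L + 9/16 = (2 L - 3/4)²`. -/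

namespace Real

theorem log_four_mul_log_sq_le {y : ℝ} (hy : 1 < y) :
    log (4 * y * log y ^ 2) ≤ 4 * log y ^ 2 := by
  have hL : 0 < log y := log_pos hy
  have hexpand : log (4 * y * log y ^ 2) = log 4 + log y + 2 * log (log y) := by
    rw [log_mul (by positivity) (by positivity), log_mul (by norm_num) (by positivity), log_pow]
    push_cast
    ring
  have hlog4 : log 4 < 23 / 16 := by
    rw [show (4 : ℝ) = 2 ^ 2 by norm_num, log_pow]
    have := log_two_lt_d9
    push_cast
    linarith
  have hlogL : log (log y) ≤ log y - 1 := log_le_sub_one_of_pos hL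
  rw [hexpand]
  nlinarith [sq_nonneg (2 * log y - 3 / 4)]

end Real

/-- **Lemma A.2**: for `a, b > 2` and `x := 4 a (log (a b))²`, we have `x ≥ a log (b x)`. -/
theorem lem_w (a b x : ℝ) (ha : 2 < a) (hb : 2 < b)
    (hx : x = 4 * a * (Real.log (a * b)) ^ 2) :
    a * Real.log (b * x) ≤ x := by
  have hab : 1 < a * b := by nlinarith
  have hbx : b * x = 4 * (a * b) * Real.log (a * b) ^ 2 := by rw [hx]; ring
  calc a * Real.log (b * x) ≤ a * (4 * Real.log (a * b) ^ 2) := by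
        rw [hbx]
        exact mul_le_mul_of_nonneg_left (Real.log_four_mul_log_sq_le hab) (by linarith)
    _ = x := by rw [hx]; ring
end
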